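/- Under the norm-recoverability assumption on the synthetic covariates, suppose g(beta) = (1/M) sum_{i=1}^M [<X_i*,beta> - c_i exp(<X_i*,beta>)] with constants c_i > 0. Then there exist constants A, B > 0 such that g(beta) <= A - B ||beta||_2 for all beta with ||beta||_2 sufficiently large; in particular, g(beta) -> -infinity as ||beta||_2 -> infinity. -/
import Mathlib


open Filter Real
open scoped RealInnerProductSpace BigOperators

lemma key_bound (c t : ℝ) (hc : 0 < c) :
    t - c * Real.exp t ≤ -|t| + max 0 (2 * Real.log (2 / c)) := by
  rcases le_or_gt t 0 with ht | ht
  · rw [abs_of_nonpos ht]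
    have h1 : 0 < c * Real.exp t := mul_pos hc (Real.exp_pos t)
    have h2 : (0:ℝ) ≤ max 0 (2 * Real.log (2 / c)) := le_max_left _ _
    linarith
  · rw [abs_of_pos ht]
    have hL : Real.exp (Real.log (2 / c)) = 2 / c := Real.exp_log (by positivity)
    set L := Real.log (2 / c) with hLdef
    have hexp : c * Real.exp t = 2 * Real.exp (t - L) := by
      rw [Real.exp_sub, hL]
      field_simp
    have h3 : t - L + 1 ≤ Real.exp (t - L) := Real.add_one_le_exp _
    have h4 : 2 * L ≤ max 0 (2 * L) := le_max_right _ _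
    nlinarith [Real.exp_pos (t - L)]

/-- Under norm-recoverability, `g(β) = (1/M) ∑ᵢ [⟪Xᵢ*,β⟫ - cᵢ exp(⟪Xᵢ*,β⟫)]` tends to `-∞`
as `‖β‖ → ∞`; more precisely there are constants `A, B > 0` with `g(β) ≤ A - B‖β‖`
for all `β` with `‖β‖` sufficiently large. -/
theorem synthetic_loglik_tendsto_atBot (p M : ℕ) (hM : 0 < M)
    (X : Fin M → EuclideanSpace ℝ (Fin p)) (c : Fin M → ℝ) (hc : ∀ i, 0 < c i)
    (c1 : ℝ) (hc1 : 0 < c1)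
    (hnr : ∀ β : EuclideanSpace ℝ (Fin p),
      c1 * ‖β‖ ≤ (1 / (M : ℝ)) * ∑ i, |⟪X i, β⟫|) :
    Filter.Tendsto
      (fun β : EuclideanSpace ℝ (Fin p) =>
        (1 / (M : ℝ)) * ∑ i, (⟪X i, β⟫ - c i * Real.exp ⟪X i, β⟫))
      (Filter.comap (fun β : EuclideanSpace ℝ (Fin p) => ‖β‖) Filter.atTop) Filter.atBot ∧
    ∃ A B : ℝ, 0 < A ∧ 0 < B ∧ ∃ R : ℝ, ∀ β : EuclideanSpace ℝ (Fin p), R ≤ ‖β‖ →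
      (1 / (M : ℝ)) * ∑ i, (⟪X i, β⟫ - c i * Real.exp ⟪X i, β⟫) ≤ A - B * ‖β‖ := by
  set K : Fin M → ℝ := fun i => max 0 (2 * Real.log (2 / c i)) with hK
  set Kbar : ℝ := (1 / (M : ℝ)) * ∑ i, K i with hKbar
  have hMpos : (0:ℝ) < (M : ℝ) := Nat.cast_pos.mpr hM
  have hKnn : 0 ≤ Kbar := by
    apply mul_nonneg (by positivity)
    exact Finset.sum_nonneg fun i _ => le_max_left _ _
  have hmain : ∀ β : EuclideanSpace ℝ (Fin p),
      (1 / (M : ℝ)) * ∑ i, (⟪X i, β⟫ - c i * Real.exp ⟪X i, β⟫)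
        ≤ (Kbar + 1) - c1 * ‖β‖ := by
    intro β
    have hsum : ∑ i, (⟪X i, β⟫ - c i * Real.exp ⟪X i, β⟫)
        ≤ ∑ i, (-|⟪X i, β⟫| + K i) :=
      Finset.sum_le_sum fun i _ => key_bound (c i) ⟪X i, β⟫ (hc i)
    have h1 : (1 / (M : ℝ)) * ∑ i, (⟪X i, β⟫ - c i * Real.exp ⟪X i, β⟫)
        ≤ (1 / (M : ℝ)) * ∑ i, (-|⟪X i, β⟫| + K i) :=
      mul_le_mul_of_nonneg_left hsum (by positivity)
    have h2 : (1 / (M : ℝ)) * ∑ i, (-|⟪X i, β⟫| + K i)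
        = -((1 / (M : ℝ)) * ∑ i, |⟪X i, β⟫|) + Kbar := by
      rw [Finset.sum_add_distrib, Finset.sum_neg_distrib]
      ring
    have h3 := hnr β
    linarith
  refine ⟨?_, Kbar + 1, c1, by linarith, hc1, 0, fun β _ => hmain β⟩
  have hnorm : Tendsto (fun β : EuclideanSpace ℝ (Fin p) => ‖β‖)
      (Filter.comap (fun β : EuclideanSpace ℝ (Fin p) => ‖β‖) Filter.atTop) Filter.atTop :=
    tendsto_comap
  have hlin : Tendsto (fun x : ℝ => (Kbar + 1) - c1 * x) Filter.atTop Filter.atBot := by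
    apply Filter.tendsto_atBot_add_const_left
    exact (tendsto_neg_atBot_iff.mpr (Filter.Tendsto.const_mul_atTop hc1 tendsto_id)).congr
      (fun x => by simp)
  exact tendsto_atBot_mono hmain (hlin.comp hnorm)
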